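/- Let M be an n×m matrix with strictly positive entries and let r ∈ ℝ^n, c ∈ ℝ^m be probability vectors with strictly positive entries. For λ > 0 let M^(λ) = Φ(M^[λ], r, c) be the unique minimizer of D_KL(P‖M^[λ]) over P ∈ U(r,c), where (M^[λ])_ij = (M_ij)^λ. Then M^(λ) converges entrywise to the outer product matrix (r_i · c_j)_{ij} as λ → 0⁺. -/

import Mathlib

/-!
Write `P = M^(λ)` and `R = r ⊗ c`. Since `R ∈ U(r, c)` and `∑ P log R` depends only on the
marginals of `P`, comparing `P` with the competitor `R` gives
`D_KL(P ‖ R) ≤ λ (⟨P, log M⟩ - ⟨R, log M⟩) ≤ 2 λ ∑ |log Mᵢⱼ|`.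
The elementary bound `x log (x / y) - x + y ≥ (√x - √y)²` (which is `log s ≥ 1 - 1 / s` at
`s = √(x / y)`) bounds every `(√Pᵢⱼ - √Rᵢⱼ)²` by `D_KL(P ‖ R)`, hence `Pᵢⱼ → Rᵢⱼ`.
-/

/-- Relative entropy `D_KL(P‖M) = Σ_{ij} P_ij log(P_ij/M_ij)` (real-valued version,
with `0 log 0 = 0`; adequate when `M` has strictly positive entries). -/
noncomputable def klReal {n m : ℕ} (P M : Matrix (Fin n) (Fin m) ℝ) : ℝ :=
  ∑ i, ∑ j, P i j * Real.log (P i j / M i j)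

/-- `U(r,c)`: nonnegative matrices with row sums `r` and column sums `c`. -/
def transportPolytope {n m : ℕ} (r : Fin n → ℝ) (c : Fin m → ℝ) :
    Set (Matrix (Fin n) (Fin m) ℝ) :=
  {P | (∀ i j, 0 ≤ P i j) ∧ (∀ i, ∑ j, P i j = r i) ∧ (∀ j, ∑ i, P i j = c j)}

open Real Matrix Filter Topology

theorem sq_sqrt_sub_sqrt_le_mul_log_div {x y : ℝ} (hx : 0 ≤ x) (hy : 0 < y) :
    (√x - √y) ^ 2 ≤ x * log (x / y) - x + y := by
  rcases hx.eq_or_lt with rfl | hx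
  · simp [sq_sqrt hy.le]
  have hsx := sqrt_pos.2 hx
  have hlog : log (√y / √x) ≤ √y / √x - 1 := log_le_sub_one_of_pos (by positivity)
  rw [log_div (sqrt_pos.2 hy).ne' hsx.ne', log_sqrt hy.le, log_sqrt hx.le] at hlog
  have hmul : x * (√y / √x) = √x * √y := by
    field_simp; exact (sq_sqrt hx.le).symm
  rw [log_div hx.ne' hy.ne', sub_sq, sq_sqrt hx.le, sq_sqrt hy.le]
  nlinarith [mul_le_mul_of_nonneg_left hlog hx.le]

theorem tendsto_of_sq_sqrt_sub_sqrt_le {α : Type*} {l : Filter α} {f g : α → ℝ} {a : ℝ}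
    (hf : ∀ᶠ x in l, 0 ≤ f x) (ha : 0 ≤ a) (hfg : ∀ᶠ x in l, (√(f x) - √a) ^ 2 ≤ g x)
    (hg : Tendsto g l (𝓝 0)) : Tendsto f l (𝓝 a) := by
  have hsqrt_g : Tendsto (fun x => √(g x)) l (𝓝 0) := by simpa using hg.sqrt
  have hsqrt_f : Tendsto (fun x => √(f x)) l (𝓝 √a) := by
    rw [tendsto_iff_dist_tendsto_zero]
    refine squeeze_zero' (.of_forall fun _ => dist_nonneg) ?_ hsqrt_g
    filter_upwards [hfg] with x hx
    rw [dist_eq, ← sqrt_sq_eq_abs]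
    exact sqrt_le_sqrt hx
  have := hsqrt_f.pow 2
  rw [sq_sqrt ha] at this
  refine this.congr' ?_
  filter_upwards [hf] with x hx using sq_sqrt hx

section Matrices

variable {n m : ℕ}

noncomputable def negCrossEntropy (P N : Matrix (Fin n) (Fin m) ℝ) : ℝ :=
  ∑ i, ∑ j, P i j * log (N i j)

theorem klReal_eq_negCrossEntropy_sub {P N : Matrix (Fin n) (Fin m) ℝ}
    (hN : ∀ i j, N i j ≠ 0) :
    klReal P N = negCrossEntropy P P - negCrossEntropy P N := by
  simp only [klReal, negCrossEntropy, ← Finset.sum_sub_distrib]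
  refine Finset.sum_congr rfl fun i _ => Finset.sum_congr rfl fun j _ => ?_
  rcases eq_or_ne (P i j) 0 with hP | hP
  · simp [hP]
  · rw [log_div hP (hN i j)]; ring

theorem negCrossEntropy_rpow (P : Matrix (Fin n) (Fin m) ℝ) {M : Matrix (Fin n) (Fin m) ℝ}
    (hM : ∀ i j, 0 < M i j) (lam : ℝ) :
    negCrossEntropy P (fun i j => M i j ^ lam) = lam * negCrossEntropy P M := by
  simp only [negCrossEntropy, Finset.mul_sum, log_rpow (hM _ _)]
  exact Finset.sum_congr rfl fun i _ => Finset.sum_congr rfl fun j _ => by ring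

theorem abs_negCrossEntropy_le {P : Matrix (Fin n) (Fin m) ℝ} (hP₀ : ∀ i j, 0 ≤ P i j)
    (hP₁ : ∀ i j, P i j ≤ 1) (N : Matrix (Fin n) (Fin m) ℝ) :
    |negCrossEntropy P N| ≤ ∑ i, ∑ j, |log (N i j)| := by
  refine (Finset.abs_sum_le_sum_abs _ _).trans <| Finset.sum_le_sum fun i _ =>
    (Finset.abs_sum_le_sum_abs _ _).trans <| Finset.sum_le_sum fun j _ => ?_
  rw [abs_mul, abs_of_nonneg (hP₀ i j)]
  exact mul_le_of_le_one_left (abs_nonneg _) (hP₁ i j)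

theorem sq_sqrt_sub_sqrt_le_klReal {P Q : Matrix (Fin n) (Fin m) ℝ} (hP : ∀ i j, 0 ≤ P i j)
    (hQ : ∀ i j, 0 < Q i j) (hmass : ∑ i, ∑ j, P i j = ∑ i, ∑ j, Q i j) (i : Fin n) (j : Fin m) :
    (√(P i j) - √(Q i j)) ^ 2 ≤ klReal P Q := by
  set term : Fin n → Fin m → ℝ := fun i j => P i j * log (P i j / Q i j) - P i j + Q i j
  have hterm : ∀ i j, (√(P i j) - √(Q i j)) ^ 2 ≤ term i j := fun i j =>
    sq_sqrt_sub_sqrt_le_mul_log_div (hP i j) (hQ i j)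
  have hterm₀ : ∀ i j, 0 ≤ term i j := fun i j => (sq_nonneg _).trans (hterm i j)
  have hsum : ∑ i, ∑ j, term i j = klReal P Q := by
    simp only [term, klReal, Finset.sum_add_distrib, Finset.sum_sub_distrib, hmass]
    ring
  calc (√(P i j) - √(Q i j)) ^ 2 ≤ term i j := hterm i j
    _ ≤ ∑ j', term i j' := Finset.single_le_sum (fun j' _ => hterm₀ i j') (Finset.mem_univ j)
    _ ≤ ∑ i', ∑ j', term i' j' := Finset.single_le_sum
          (fun i' _ => Finset.sum_nonneg fun j' _ => hterm₀ i' j') (Finset.mem_univ i)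
    _ = klReal P Q := hsum

end Matrices

section TransportPolytope

variable {n m : ℕ} {r : Fin n → ℝ} {c : Fin m → ℝ} {P : Matrix (Fin n) (Fin m) ℝ}

theorem sum_sum_eq_of_mem_transportPolytope (hP : P ∈ transportPolytope r c) :
    ∑ i, ∑ j, P i j = ∑ i, r i :=
  Finset.sum_congr rfl fun i _ => hP.2.1 i

theorem le_one_of_mem_transportPolytope (hr : ∑ i, r i = 1) (hP : P ∈ transportPolytope r c)
    (i : Fin n) (j : Fin m) : P i j ≤ 1 :=
  calc P i j ≤ ∑ j', P i j' := Finset.single_le_sum (fun j' _ => hP.1 i j') (Finset.mem_univ j)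
    _ ≤ ∑ i', ∑ j', P i' j' := Finset.single_le_sum
          (fun i' _ => Finset.sum_nonneg fun j' _ => hP.1 i' j') (Finset.mem_univ i)
    _ = 1 := by rw [sum_sum_eq_of_mem_transportPolytope hP, hr]

theorem vecMulVec_mem_transportPolytope (hr : ∀ i, 0 ≤ r i) (hc : ∀ j, 0 ≤ c j)
    (hr1 : ∑ i, r i = 1) (hc1 : ∑ j, c j = 1) : vecMulVec r c ∈ transportPolytope r c := by
  refine ⟨fun i j => mul_nonneg (hr i) (hc j), fun i => ?_, fun j => ?_⟩
  · simp only [vecMulVec_apply, ← Finset.mul_sum, hc1, mul_one]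
  · simp only [vecMulVec_apply, ← Finset.sum_mul, hr1, one_mul]

theorem negCrossEntropy_vecMulVec_of_mem_transportPolytope (hr : ∀ i, 0 < r i)
    (hc : ∀ j, 0 < c j) (hP : P ∈ transportPolytope r c) :
    negCrossEntropy P (vecMulVec r c) = ∑ i, r i * log (r i) + ∑ j, c j * log (c j) := by
  simp only [negCrossEntropy, vecMulVec_apply, log_mul (hr _).ne' (hc _).ne', mul_add,
    Finset.sum_add_distrib]
  congr 1
  · exact Finset.sum_congr rfl fun i _ => by rw [← Finset.sum_mul, hP.2.1 i]
  · rw [Finset.sum_comm]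
    exact Finset.sum_congr rfl fun j _ => by rw [← Finset.sum_mul, hP.2.2 j]

theorem klReal_vecMulVec_le_of_isMinOn {M : Matrix (Fin n) (Fin m) ℝ} (hM : ∀ i j, 0 < M i j)
    (hr : ∀ i, 0 < r i) (hc : ∀ j, 0 < c j) (hr1 : ∑ i, r i = 1) (hc1 : ∑ j, c j = 1)
    {lam : ℝ} (hlam : 0 ≤ lam) (hP : P ∈ transportPolytope r c)
    (hmin : IsMinOn (fun Q => klReal Q (fun i j => M i j ^ lam)) (transportPolytope r c) P) :
    klReal P (vecMulVec r c) ≤ lam * (2 * ∑ i, ∑ j, |log (M i j)|) := by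
  have hR := vecMulVec_mem_transportPolytope (fun i => (hr i).le) (fun j => (hc j).le) hr1 hc1
  have hMlam : ∀ i j, M i j ^ lam ≠ 0 := fun i j => (rpow_pos_of_pos (hM i j) lam).ne'
  have hRpos : ∀ i j, vecMulVec r c i j ≠ 0 := fun i j => (mul_pos (hr i) (hc j)).ne'
  have hopt : klReal P _ ≤ klReal _ _ := isMinOn_iff.1 hmin _ hR
  rw [klReal_eq_negCrossEntropy_sub hMlam, klReal_eq_negCrossEntropy_sub hMlam,
    negCrossEntropy_rpow _ hM, negCrossEntropy_rpow _ hM] at hopt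
  have hPM := abs_le.1 (abs_negCrossEntropy_le hP.1 (le_one_of_mem_transportPolytope hr1 hP) M)
  have hRM := abs_le.1 (abs_negCrossEntropy_le hR.1 (le_one_of_mem_transportPolytope hr1 hR) M)
  calc klReal P (vecMulVec r c)
      = negCrossEntropy P P - negCrossEntropy (vecMulVec r c) (vecMulVec r c) := by
        rw [klReal_eq_negCrossEntropy_sub hRpos,
          negCrossEntropy_vecMulVec_of_mem_transportPolytope hr hc hP,
          negCrossEntropy_vecMulVec_of_mem_transportPolytope hr hc hR]
    _ ≤ lam * (negCrossEntropy P M - negCrossEntropy (vecMulVec r c) M) := by linarith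
    _ ≤ lam * (2 * ∑ i, ∑ j, |log (M i j)|) :=
        mul_le_mul_of_nonneg_left (by linarith) hlam

end TransportPolytope

/-- For strictly positive `M` and strictly positive probability vectors `r`, `c`, let
`Mlim λ` be the (unique) minimizer of `D_KL(P‖M^[λ])` over `U(r,c)`, where `M^[λ]` is
the entrywise `λ`-power. Then `Mlim λ` converges entrywise to the outer product
`(r_i · c_j)_{ij}` as `λ → 0⁺`. -/
theorem sinkhorn_limit_as_lambda_to_zero {n m : ℕ}
    (M : Matrix (Fin n) (Fin m) ℝ) (hM : ∀ i j, 0 < M i j)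
    (r : Fin n → ℝ) (c : Fin m → ℝ)
    (hr : ∀ i, 0 < r i) (hc : ∀ j, 0 < c j)
    (hr1 : ∑ i, r i = 1) (hc1 : ∑ j, c j = 1)
    (Mlim : ℝ → Matrix (Fin n) (Fin m) ℝ)
    (hmin : ∀ lam : ℝ, 0 < lam →
      Mlim lam ∈ transportPolytope r c ∧
      ∀ Q ∈ transportPolytope r c,
        klReal (Mlim lam) (fun i j => M i j ^ lam) ≤ klReal Q (fun i j => M i j ^ lam)) :
    Filter.Tendsto Mlim (nhdsWithin 0 (Set.Ioi 0))
      (nhds (fun i j => r i * c j)) := by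
  change Tendsto Mlim (𝓝[>] 0) (𝓝 (vecMulVec r c))
  have hR := vecMulVec_mem_transportPolytope (fun i => (hr i).le) (fun j => (hc j).le) hr1 hc1
  set C := ∑ i, ∑ j, |log (M i j)|
  have hkl : ∀ lam, 0 < lam → klReal (Mlim lam) (vecMulVec r c) ≤ lam * (2 * C) :=
    fun lam hlam => klReal_vecMulVec_le_of_isMinOn hM hr hc hr1 hc1 hlam.le (hmin lam hlam).1
      (isMinOn_iff.2 (hmin lam hlam).2)
  have hlin : Tendsto (fun lam : ℝ => lam * (2 * C)) (𝓝[>] 0) (𝓝 0) :=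
    ((continuous_mul_const (2 * C)).tendsto' 0 0 (zero_mul _)).mono_left nhdsWithin_le_nhds
  refine tendsto_pi_nhds.2 fun i => tendsto_pi_nhds.2 fun j => ?_
  refine tendsto_of_sq_sqrt_sub_sqrt_le ?_ (hR.1 i j) ?_ hlin
  · filter_upwards [self_mem_nhdsWithin] with lam hlam using (hmin lam hlam).1.1 i j
  · filter_upwards [self_mem_nhdsWithin] with lam hlam
    have hP := (hmin lam hlam).1
    have hmass : ∑ i, ∑ j, Mlim lam i j = ∑ i, ∑ j, vecMulVec r c i j := by
      rw [sum_sum_eq_of_mem_transportPolytope hP, sum_sum_eq_of_mem_transportPolytope hR]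
    exact (sq_sqrt_sub_sqrt_le_klReal hP.1 (fun i j => mul_pos (hr i) (hc j)) hmass i j).trans
      (hkl lam hlam)
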